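/- Let K be a (commutative) field, n a positive integer, and A, B ∈ M_n(K) two nilpotent matrices such that A + B is also nilpotent. Then the trace of the product satisfies tr(A·B) = 0. -/

import Mathlib

/-!
Over `R[t]`, nilpotency of `A`, `B` and `A + B` gives
`det (1 - t A) = det (1 - t B) = det (1 - t (A + B)) = 1`. With `U = 1 - t (A + B)`, whose inverse
is `adj U`, one has `(1 - t A) (1 - t B) = U (1 + t² N)` for `N = adj U * A * B`, so
`det (1 + t² N) = 1`. Its `t²`-coefficient is the constant term of `tr N`, which is `tr (A B)`
because `U ≡ 1 mod t`.
-/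

open Polynomial

namespace Matrix

variable {R : Type*} [CommRing R] {n : Type*} [DecidableEq n] [Fintype n]

theorem charpolyRev_eq_one_of_isNilpotent [IsReduced R] {M : Matrix n n R} (hM : IsNilpotent M) :
    M.charpolyRev = 1 := by
  obtain ⟨-, hcoeff⟩ :=
    isUnit_iff_coeff_isUnit_isNilpotent.mp (isUnit_charpolyRev_of_isNilpotent hM)
  ext (_ | i)
  · simp [coeff_zero_eq_eval_zero]
  · simpa [coeff_one] using (hcoeff (i + 1) i.succ_ne_zero).eq_zero

theorem coeff_zero_trace_eq_zero_of_det_one_add_X_sq_smul {N : Matrix n n R[X]}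
    (hN : (1 + (X ^ 2 : R[X]) • N).det = 1) : N.trace.coeff 0 = 0 := by
  have h := congrArg (coeff · 2) (hN.symm.trans (det_one_add_smul _ N))
  simpa [coeff_one, ← pow_mul, coeff_mul_X_pow'] using h.symm

theorem trace_mul_eq_zero_of_charpolyRev_eq_one {A B : Matrix n n R} (hA : A.charpolyRev = 1)
    (hB : B.charpolyRev = 1) (hAB : (A + B).charpolyRev = 1) : (A * B).trace = 0 := by
  set U : Matrix n n R[X] := 1 - (X : R[X]) • (A + B).map C
  have hU : U * U.adjugate = 1 := by rw [mul_adjugate, ← charpolyRev, hAB, one_smul]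
  set N := U.adjugate * (A * B).map C
  have hfactor : (1 - (X : R[X]) • A.map C) * (1 - (X : R[X]) • B.map C) =
      U * (1 + (X ^ 2 : R[X]) • N) := by
    rw [mul_add, mul_one, mul_smul_comm, ← Matrix.mul_assoc, hU, Matrix.one_mul]
    simp only [U, Matrix.map_add _ (map_add C), Matrix.map_mul, smul_add, sub_mul, mul_sub,
      smul_mul_smul_comm, mul_one, Matrix.one_mul, sq]
    abel
  have hdet : (1 + (X ^ 2 : R[X]) • N).det = 1 := by
    have h := congrArg det hfactor
    rw [det_mul, det_mul] at h
    change A.charpolyRev * B.charpolyRev = (A + B).charpolyRev * _ at h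
    rwa [hA, hB, hAB, one_mul, one_mul, eq_comm] at h
  have hU0 : U.map (evalRingHom 0) = 1 := by
    ext i j
    by_cases h : i = j <;> simp [U, one_apply, h]
  have hN0 : N.trace.coeff 0 = (A * B).trace := by
    rw [coeff_zero_eq_eval_zero, ← coe_evalRingHom, AddMonoidHom.map_trace, Matrix.map_mul,
      ← RingHom.mapMatrix_apply, RingHom.map_adjugate, RingHom.mapMatrix_apply, hU0,
      adjugate_one, Matrix.one_mul, Matrix.map_map]
    simp [Function.comp_def]
  rw [← hN0]
  exact coeff_zero_trace_eq_zero_of_det_one_add_X_sq_smul hdet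

end Matrix

theorem stmt_6_general (K : Type*) [Field K] (n : ℕ)
    (A B : Matrix (Fin n) (Fin n) K)
    (hA : IsNilpotent A) (hB : IsNilpotent B) (hAB : IsNilpotent (A + B)) :
    Matrix.trace (A * B) = 0 :=
  Matrix.trace_mul_eq_zero_of_charpolyRev_eq_one (Matrix.charpolyRev_eq_one_of_isNilpotent hA)
    (Matrix.charpolyRev_eq_one_of_isNilpotent hB) (Matrix.charpolyRev_eq_one_of_isNilpotent hAB)

/-- If `A`, `B` and `A + B` are nilpotent matrices over a commutative field, then
`tr (A * B) = 0`. -/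
theorem stmt_6 (K : Type*) [Field K] (n : ℕ) (hn : 0 < n)
    (A B : Matrix (Fin n) (Fin n) K)
    (hA : IsNilpotent A) (hB : IsNilpotent B) (hAB : IsNilpotent (A + B)) :
    Matrix.trace (A * B) = 0 :=
  stmt_6_general K n A B hA hB hAB
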